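/- Let Φ ∈ ℂ^{M×N} with ΦΦ* invertible, and let γ ≥ 0 be a preconditioned restricted isometry constant of order t for Φ. If V ∈ ℂ^{N×L} and R ⊆ {1,…,N} satisfy |R ∪ supp(V)| ≤ t, then ‖[(I − Φ*(ΦΦ*)⁻¹Φ)V]_(R)‖_F ≤ γ · ‖V‖_F. -/

import Mathlib

open Matrix BigOperators

/-- Frobenius norm of a complex matrix. -/
noncomputable def frobNorm {m n : Type*} [Fintype m] [Fintype n] (A : Matrix m n ℂ) : ℝ :=
  Real.sqrt (∑ i, ∑ j, ‖A i j‖ ^ 2)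

open scoped Classical in
/-- The row support of a matrix: indices of its nonzero rows. -/
noncomputable def rowSupp {N L : ℕ} (X : Matrix (Fin N) (Fin L) ℂ) : Finset (Fin N) :=
  Finset.univ.filter (fun i => X i ≠ 0)

/-- `X_(T)`: the matrix obtained from `X` by zeroing every row with index outside `T`. -/
def rowRestrict {N L : ℕ} (T : Finset (Fin N)) (X : Matrix (Fin N) (Fin L) ℂ) :
    Matrix (Fin N) (Fin L) ℂ :=
  fun i j => if i ∈ T then X i j else 0

/-- Euclidean norm of a complex vector. -/
noncomputable def vecNorm {ι : Type*} [Fintype ι] (v : ι → ℂ) : ℝ :=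
  Real.sqrt (∑ i, ‖v i‖ ^ 2)

/-- `Φ_T`: the submatrix of columns of `Φ` indexed by `T`. -/
def colSub {M N : ℕ} (Φ : Matrix (Fin M) (Fin N) ℂ) (T : Finset (Fin N)) :
    Matrix (Fin M) {x // x ∈ T} ℂ :=
  fun i j => Φ i j.val

/-- `X_{(T)}`: the submatrix of rows of `X` indexed by `T`. -/
def rowSub {N L : ℕ} (T : Finset (Fin N)) (X : Matrix (Fin N) (Fin L) ℂ) :
    Matrix {x // x ∈ T} (Fin L) ℂ :=
  fun i j => X i.val j

/-- The set of values `‖R v‖` over unit vectors `v` (the "singular value range"). -/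
noncomputable def sigmaSet {L : ℕ} (R : Matrix (Fin L) (Fin L) ℂ) : Set ℝ :=
  {c | ∃ v : Fin L → ℂ, vecNorm v = 1 ∧ c = vecNorm (R.mulVec v)}

/-- The largest singular value of `R`. -/
noncomputable def sigmaMax {L : ℕ} (R : Matrix (Fin L) (Fin L) ℂ) : ℝ :=
  sSup (sigmaSet R)

/-- The smallest singular value of `R` (for invertible `R`). -/
noncomputable def sigmaMin {L : ℕ} (R : Matrix (Fin L) (Fin L) ℂ) : ℝ :=
  sInf (sigmaSet R)

/-- Spectral (operator) norm of a square complex matrix. -/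
noncomputable def specNorm {ι : Type*} [Fintype ι] (A : Matrix ι ι ℂ) : ℝ :=
  sSup {c | ∃ v : ι → ℂ, vecNorm v = 1 ∧ c = vecNorm (A.mulVec v)}

/-- `δ` is a restricted isometry constant (RIC) of order `t` for `A`, relative to matrices with
`L` columns: `(1-δ)‖Z‖_F² ≤ ‖AZ‖_F² ≤ (1+δ)‖Z‖_F²` for every `t` row-sparse `Z`. -/
def IsRIC {M N : ℕ} (L : ℕ) (A : Matrix (Fin M) (Fin N) ℂ) (t : ℕ) (δ : ℝ) : Prop :=
  ∀ Z : Matrix (Fin N) (Fin L) ℂ, (rowSupp Z).card ≤ t →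
    (1 - δ) * frobNorm Z ^ 2 ≤ frobNorm (A * Z) ^ 2 ∧
      frobNorm (A * Z) ^ 2 ≤ (1 + δ) * frobNorm Z ^ 2

/-- `γ` is a preconditioned restricted isometry constant (P-RIC) of order `t` for `Φ`:
`(1-γ)‖Z‖_F² ≤ Re tr((ΦZ)* (ΦΦ*)⁻¹ (ΦZ))` for every `t` row-sparse `Z`. -/
def IsPRIC {M N : ℕ} (L : ℕ) (Φ : Matrix (Fin M) (Fin N) ℂ) (t : ℕ) (γ : ℝ) : Prop :=
  ∀ Z : Matrix (Fin N) (Fin L) ℂ, (rowSupp Z).card ≤ t →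
    (1 - γ) * frobNorm Z ^ 2 ≤ (Matrix.trace ((Φ * Z)ᴴ * ((Φ * Φᴴ)⁻¹ * (Φ * Z)))).re

/-- `θ` is an upper restricted isometry constant of order `t` for `A`:
`‖AZ‖_F² ≤ (1+θ)‖Z‖_F²` for every `t` row-sparse `Z`. -/
def IsUpperRIC {M N : ℕ} (L : ℕ) (A : Matrix (Fin M) (Fin N) ℂ) (t : ℕ) (θ : ℝ) : Prop :=
  ∀ Z : Matrix (Fin N) (Fin L) ℂ, (rowSupp Z).card ≤ t →
    frobNorm (A * Z) ^ 2 ≤ (1 + θ) * frobNorm Z ^ 2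

/-- The least-squares feedback of `X` on the index set `T`:
rows outside `T` are zero and on `T` it equals
`X_{(T)} + (Φ_T* Φ_T)⁻¹ Φ_T* Φ_{T^c} X_{(T^c)}`. -/
noncomputable def feedback {M N L : ℕ} (Φ : Matrix (Fin M) (Fin N) ℂ) (T : Finset (Fin N))
    (X : Matrix (Fin N) (Fin L) ℂ) : Matrix (Fin N) (Fin L) ℂ :=
  fun i j =>
    if h : i ∈ T then
      (rowSub T X +
        ((colSub Φ T)ᴴ * colSub Φ T)⁻¹ * (colSub Φ T)ᴴ *
          (colSub Φ Tᶜ * rowSub Tᶜ X)) ⟨i, h⟩ j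
    else 0

/-!
`P = Φᴴ (ΦΦᴴ)⁻¹ Φ` is the orthogonal projection onto the row space of `Φ`, hence so is
`Q = 1 - P`, and the P-RIC condition says exactly `‖QZ‖_F² ≤ γ ‖Z‖_F²` for `t` row-sparse `Z`.
Zeroing the rows outside `R` is an orthogonal projection as well, so `W = (QV)_(R)` satisfies
`‖W‖_F² = Re tr (Wᴴ QV) = Re tr ((QW)ᴴ QV) ≤ ‖QW‖_F ‖QV‖_F ≤ γ ‖W‖_F ‖V‖_F`,
where both `W` and `V` are supported in `R ∪ supp V`.
-/

section Frobenius

variable {m n : Type*} [Fintype m] [Fintype n]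

noncomputable def frobVec (A : Matrix m n ℂ) : EuclideanSpace ℂ (m × n) :=
  WithLp.toLp 2 fun p => A p.1 p.2

theorem frobNorm_nonneg (A : Matrix m n ℂ) : 0 ≤ frobNorm A :=
  Real.sqrt_nonneg _

theorem frobNorm_eq_norm_frobVec (A : Matrix m n ℂ) : frobNorm A = ‖frobVec A‖ := by
  rw [frobNorm, EuclideanSpace.norm_eq, ← Fintype.sum_prod_type']
  rfl

theorem trace_conjTranspose_mul_eq_inner (A B : Matrix m n ℂ) :
    trace (Aᴴ * B) = inner ℂ (frobVec A) (frobVec B) := by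
  simp only [trace, diag, mul_apply, conjTranspose_apply, PiLp.inner_apply, frobVec,
    Fintype.sum_prod_type, RCLike.inner_apply, mul_comm]
  exact Finset.sum_comm

theorem frobNorm_sq_eq_re_trace (A : Matrix m n ℂ) :
    frobNorm A ^ 2 = (trace (Aᴴ * A)).re := by
  rw [trace_conjTranspose_mul_eq_inner, inner_self_eq_norm_sq_to_K, frobNorm_eq_norm_frobVec]
  norm_cast

theorem re_trace_conjTranspose_mul_le (A B : Matrix m n ℂ) :
    (trace (Aᴴ * B)).re ≤ frobNorm A * frobNorm B := by
  rw [trace_conjTranspose_mul_eq_inner, frobNorm_eq_norm_frobVec, frobNorm_eq_norm_frobVec]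
  exact re_inner_le_norm (𝕜 := ℂ) (frobVec A) (frobVec B)

end Frobenius

theorem Matrix.IsHermitian.conjTranspose_mul_mul_of_isIdempotentElem {α m n : Type*}
    [Fintype m] [CommRing α] [StarRing α] {Q : Matrix m m α} (hQ : Q.IsHermitian)
    (hQQ : IsIdempotentElem Q) (A B : Matrix m n α) :
    (Q * A)ᴴ * (Q * B) = Aᴴ * (Q * B) := by
  rw [conjTranspose_mul, hQ.eq, Matrix.mul_assoc, ← Matrix.mul_assoc Q, hQQ.eq]

section Projection

variable {α M N : Type*} [CommRing α] [StarRing α] [Fintype M] [DecidableEq M] [Fintype N]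

theorem isHermitian_conjTranspose_mul_inv_mul (Φ : Matrix M N α) :
    (Φᴴ * (Φ * Φᴴ)⁻¹ * Φ).IsHermitian := by
  simpa using isHermitian_conjTranspose_mul_mul Φ (isHermitian_mul_conjTranspose_self Φ).inv

theorem isIdempotentElem_conjTranspose_mul_inv_mul (Φ : Matrix M N α) (hΦ : IsUnit (Φ * Φᴴ)) :
    IsIdempotentElem (Φᴴ * (Φ * Φᴴ)⁻¹ * Φ) := by
  have hdet : IsUnit (Φ * Φᴴ).det := (isUnit_iff_isUnit_det _).mp hΦ
  change Φᴴ * (Φ * Φᴴ)⁻¹ * Φ * (Φᴴ * (Φ * Φᴴ)⁻¹ * Φ) = Φᴴ * (Φ * Φᴴ)⁻¹ * Φ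
  simp only [Matrix.mul_assoc]
  rw [← Matrix.mul_assoc Φ Φᴴ, ← Matrix.mul_assoc (Φ * Φᴴ)⁻¹, nonsing_inv_mul _ hdet,
    Matrix.one_mul]

end Projection

theorem rowRestrict_eq_diagonal_mul {N L : ℕ} (T : Finset (Fin N)) (X : Matrix (Fin N) (Fin L) ℂ) :
    rowRestrict T X = diagonal (fun i => if i ∈ T then (1 : ℂ) else 0) * X := by
  ext i j
  simp [rowRestrict]

theorem rowSupp_rowRestrict_subset {N L : ℕ} (T : Finset (Fin N)) (X : Matrix (Fin N) (Fin L) ℂ) :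
    rowSupp (rowRestrict T X) ⊆ T := by
  intro i hi
  by_contra hiT
  simp only [rowSupp, Finset.mem_filter] at hi
  exact hi.2 (funext fun j => if_neg hiT)

theorem frobNorm_rowRestrict_sq {N L : ℕ} (T : Finset (Fin N)) (X : Matrix (Fin N) (Fin L) ℂ) :
    frobNorm (rowRestrict T X) ^ 2 = (trace ((rowRestrict T X)ᴴ * X)).re := by
  rw [rowRestrict_eq_diagonal_mul]
  set D : Matrix (Fin N) (Fin N) ℂ := diagonal fun i => if i ∈ T then 1 else 0
  have hD : D.IsHermitian := isHermitian_diagonal_of_self_adjoint _ <| by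
    ext i; by_cases hi : i ∈ T <;> simp [hi]
  have hDD : IsIdempotentElem D := by
    rw [IsIdempotentElem, diagonal_mul_diagonal]
    congr 1; ext i; by_cases hi : i ∈ T <;> simp [hi]
  rw [frobNorm_sq_eq_re_trace, hD.conjTranspose_mul_mul_of_isIdempotentElem hDD,
    conjTranspose_mul, hD.eq, Matrix.mul_assoc]

theorem IsPRIC.frobNorm_one_sub_mul_sq_le {M N L t : ℕ} {Φ : Matrix (Fin M) (Fin N) ℂ} {γ : ℝ}
    (hPRIC : IsPRIC L Φ t γ) (hΦ : IsUnit (Φ * Φᴴ)) {Z : Matrix (Fin N) (Fin L) ℂ}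
    (hZ : (rowSupp Z).card ≤ t) :
    frobNorm ((1 - Φᴴ * (Φ * Φᴴ)⁻¹ * Φ) * Z) ^ 2 ≤ γ * frobNorm Z ^ 2 := by
  set P := Φᴴ * (Φ * Φᴴ)⁻¹ * Φ
  have hP : P.IsHermitian := isHermitian_conjTranspose_mul_inv_mul Φ
  have hPP : IsIdempotentElem P := isIdempotentElem_conjTranspose_mul_inv_mul Φ hΦ
  have htrace : trace ((Φ * Z)ᴴ * ((Φ * Φᴴ)⁻¹ * (Φ * Z))) = trace (Zᴴ * (P * Z)) := by
    simp only [P, conjTranspose_mul, Matrix.mul_assoc]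
  have hsplit : frobNorm ((1 - P) * Z) ^ 2 = frobNorm Z ^ 2 - (trace (Zᴴ * (P * Z))).re := by
    rw [frobNorm_sq_eq_re_trace, frobNorm_sq_eq_re_trace,
      (isHermitian_one.sub hP).conjTranspose_mul_mul_of_isIdempotentElem hPP.one_sub,
      Matrix.sub_mul, Matrix.one_mul, Matrix.mul_sub, trace_sub, Complex.sub_re]
  have hlower := hPRIC Z hZ
  rw [htrace] at hlower
  linarith

theorem IsPRIC.frobNorm_one_sub_mul_le {M N L t : ℕ} {Φ : Matrix (Fin M) (Fin N) ℂ} {γ : ℝ}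
    (hPRIC : IsPRIC L Φ t γ) (hΦ : IsUnit (Φ * Φᴴ)) {Z : Matrix (Fin N) (Fin L) ℂ}
    (hZ : (rowSupp Z).card ≤ t) :
    frobNorm ((1 - Φᴴ * (Φ * Φᴴ)⁻¹ * Φ) * Z) ≤ √γ * frobNorm Z := by
  have h := Real.sqrt_le_sqrt (hPRIC.frobNorm_one_sub_mul_sq_le hΦ hZ)
  rwa [Real.sqrt_mul' _ (sq_nonneg _), Real.sqrt_sq (frobNorm_nonneg _),
    Real.sqrt_sq (frobNorm_nonneg _)] at h

/-- preconditioned RIP restricted-rows estimate (second part of Remark 5). -/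
theorem stmt3 {M N L t : ℕ} (Φ : Matrix (Fin M) (Fin N) ℂ) (hinv : IsUnit (Φ * Φᴴ))
    (γ : ℝ) (hγ : 0 ≤ γ) (hPRIC : IsPRIC L Φ t γ) (V : Matrix (Fin N) (Fin L) ℂ)
    (R : Finset (Fin N)) (hsupp : (R ∪ rowSupp V).card ≤ t) :
    frobNorm (rowRestrict R ((1 - Φᴴ * (Φ * Φᴴ)⁻¹ * Φ) * V)) ≤ γ * frobNorm V := by
  set Q := 1 - Φᴴ * (Φ * Φᴴ)⁻¹ * Φ
  set W := rowRestrict R (Q * V)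
  have hQ : Q.IsHermitian := isHermitian_one.sub (isHermitian_conjTranspose_mul_inv_mul Φ)
  have hQQ : IsIdempotentElem Q := (isIdempotentElem_conjTranspose_mul_inv_mul Φ hinv).one_sub
  have hW : (rowSupp W).card ≤ t :=
    (Finset.card_le_card ((rowSupp_rowRestrict_subset R _).trans Finset.subset_union_left)).trans
      hsupp
  have hV : (rowSupp V).card ≤ t := (Finset.card_le_card Finset.subset_union_right).trans hsupp
  have key : frobNorm W * frobNorm W ≤ frobNorm W * (γ * frobNorm V) := calc
    frobNorm W * frobNorm W = (trace ((Q * W)ᴴ * (Q * V))).re := by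
      rw [← sq, frobNorm_rowRestrict_sq, hQ.conjTranspose_mul_mul_of_isIdempotentElem hQQ]
    _ ≤ frobNorm (Q * W) * frobNorm (Q * V) := re_trace_conjTranspose_mul_le _ _
    _ ≤ (√γ * frobNorm W) * (√γ * frobNorm V) :=
      mul_le_mul (hPRIC.frobNorm_one_sub_mul_le hinv hW) (hPRIC.frobNorm_one_sub_mul_le hinv hV)
        (frobNorm_nonneg _) (mul_nonneg (Real.sqrt_nonneg _) (frobNorm_nonneg _))
    _ = frobNorm W * (γ * frobNorm V) := by
      rw [mul_mul_mul_comm, Real.mul_self_sqrt hγ]; ring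
  rcases (frobNorm_nonneg W).eq_or_lt with hW0 | hW0
  · rw [← hW0]
    exact mul_nonneg hγ (frobNorm_nonneg V)
  · exact le_of_mul_le_mul_left key hW0
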